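/- Let n ≥ 2, x ∈ 𝔹ⁿ, and t > 0 with t(1−|x|) < 1. Then B_ρ(x, r) ⊂ B_c(x, t) ⊂ B_ρ(x, R), where r = log(1 + t(1−|x|)/(1 + t(1−|x|))) and R = 2t(1−|x|)/(1 − t(1−|x|)). -/

import Mathlib

open Metric Set

/-- Euclidean `n`-space. -/
abbrev E (n : ℕ) := EuclideanSpace ℝ (Fin n)

/-- The Cassinian metric of a domain `D`:
`c_D(x,y) = sup_{p ∈ ∂D} |x-y| / (|x-p| |p-y|)`. -/
noncomputable def cassinian {n : ℕ} (D : Set (E n)) (x y : E n) : ℝ :=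
  ⨆ p ∈ frontier D, dist x y / (dist x p * dist p y)

/-- The hyperbolic metric of the unit ball `𝔹ⁿ`, determined by
`sinh²(ρ(x,y)/2) = |x-y|²/((1-|x|²)(1-|y|²))`. -/
noncomputable def hyperDist {n : ℕ} (x y : E n) : ℝ :=
  2 * Real.arsinh (dist x y / Real.sqrt ((1 - ‖x‖ ^ 2) * (1 - ‖y‖ ^ 2)))

/-!
Write `a = 1 - |x|`, `b = 1 - |y|`, `m = |x - y|`. Every boundary point `p` has `|x - p| ≥ a`
and `|p - y| ≥ b`, so `c(x,y) ≤ m / (a b)`; the boundary point nearest to `x` has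
`|p - y| ≤ a + m`, so `c(x,y) ≥ m / (a (a + m))`, and symmetrically `c(x,y) ≥ m / (b (b + m))`.
On the hyperbolic side `sinh²(ρ/2) = m² / ((1-|x|²)(1-|y|²))` lies between `m² / (4 b (b + m))`,
which is `sinh²` of half of `log (1 + m / b)`, and `m² / (a b)`. Hence
`ρ < log (1 + t a / (1 + t a))` forces `m / b < t a`, i.e. `c(x,y) < t`; and `c(x,y) < t`
forces `m² / (a b) < (t a / (1 - t a))²`, so `sinh (ρ/2) < t a / (1 - t a) ≤ sinh (t a / (1 - t a))`.
-/

namespace Real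

theorem strictMonoOn_sinh_half_sq : StrictMonoOn (fun r : ℝ => sinh (r / 2) ^ 2) (Ici 0) := by
  intro r hr s hs hrs
  have hr' : 0 ≤ sinh (r / 2) := sinh_nonneg_iff.2 (by simp only [mem_Ici] at hr; linarith)
  exact pow_lt_pow_left₀ (sinh_lt_sinh.2 (by linarith)) hr' two_ne_zero

theorem sinh_half_log_sq {z : ℝ} (hz : 0 < z) : sinh (log z / 2) ^ 2 = (z - 1) ^ 2 / (4 * z) := by
  have hs : 0 < √z := sqrt_pos.2 hz
  rw [← log_sqrt hz.le, sinh_log hs]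
  field_simp
  rw [sq_sqrt hz.le]
  ring

end Real

open Real

theorem sq_div_mul_lt_sq_of_lt_mul_mul_add {a b m t : ℝ} (ha : 0 < a) (hb : 0 < b) (hm : 0 ≤ m)
    (ht : 0 ≤ t) (hta : t * a < 1) (h₁ : m < t * (a * (a + m))) (h₂ : m < t * (b * (b + m))) :
    m ^ 2 / (a * b) < (t * a / (1 - t * a)) ^ 2 := by
  set u := t * a
  have hu : 0 ≤ u := by positivity
  have hmu : 0 ≤ m * (1 - u) := mul_nonneg hm (by linarith)
  have hma : m * (1 - u) < u * a := by linarith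
  have hmb : m * a < u * b * (b + m) := by
    have := mul_lt_mul_of_pos_right h₂ ha
    linarith
  suffices (m * (1 - u)) ^ 2 < u ^ 2 * (a * b) by
    rw [div_pow, div_lt_div_iff₀ (by positivity) (by nlinarith)]
    linarith
  rcases le_or_gt a b with hab | hba
  · calc (m * (1 - u)) ^ 2 < (u * a) ^ 2 := pow_lt_pow_left₀ hma hmu two_ne_zero
      _ ≤ u ^ 2 * (a * b) := by rw [mul_pow, sq a]; gcongr
  · have hmb' : a * (m * (1 - u)) < u * b ^ 2 := by
      have : u * m * b ≤ u * m * a := by gcongr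
      linarith
    have hprod := mul_lt_mul'' hma hmb' hmu (mul_nonneg ha.le hmu)
    calc (m * (1 - u)) ^ 2 < u ^ 2 * b ^ 2 := by nlinarith
      _ ≤ u ^ 2 * (a * b) := by rw [sq b]; gcongr

section NormedSpace

variable {F : Type*} [NormedAddCommGroup F]

theorem one_sub_norm_le_dist_of_mem_sphere {x p : F} (hp : p ∈ sphere (0 : F) 1) :
    1 - ‖x‖ ≤ dist x p := by
  rw [mem_sphere_zero_iff_norm] at hp
  rw [dist_comm, dist_eq_norm, ← hp]
  exact norm_sub_norm_le p x

theorem div_dist_mul_dist_le_of_mem_sphere {x y p : F} (hx : ‖x‖ < 1) (hy : ‖y‖ < 1)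
    (hp : p ∈ sphere (0 : F) 1) :
    dist x y / (dist x p * dist p y) ≤ dist x y / ((1 - ‖x‖) * (1 - ‖y‖)) := by
  have hxp := one_sub_norm_le_dist_of_mem_sphere (x := x) hp
  have hyp := one_sub_norm_le_dist_of_mem_sphere (x := y) hp
  rw [dist_comm y] at hyp
  gcongr

variable [NormedSpace ℝ F] [Nontrivial F]

theorem exists_mem_sphere_dist_eq_one_sub_norm {x : F} (hx : ‖x‖ ≤ 1) :
    ∃ p ∈ sphere (0 : F) 1, dist x p = 1 - ‖x‖ := by
  rcases eq_or_ne x 0 with rfl | hx0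
  · obtain ⟨p, hp⟩ := exists_norm_eq F zero_le_one
    exact ⟨p, by simpa using hp, by simpa using hp⟩
  · have hx' : 0 < ‖x‖ := norm_pos_iff.2 hx0
    refine ⟨‖x‖⁻¹ • x, by simp [norm_smul, hx0], ?_⟩
    rw [dist_eq_norm, show x - ‖x‖⁻¹ • x = (1 - ‖x‖⁻¹) • x by rw [sub_smul, one_smul], norm_smul,
      Real.norm_of_nonpos (by rw [sub_nonpos]; exact (one_le_inv₀ hx').2 hx)]
    field_simp
    ring

end NormedSpace

section UnitBall

variable {n : ℕ} {x y : E n}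

theorem cassinian_ball_le (hx : ‖x‖ < 1) (hy : ‖y‖ < 1) :
    cassinian (ball (0 : E n) 1) x y ≤ dist x y / ((1 - ‖x‖) * (1 - ‖y‖)) := by
  have hbound : 0 ≤ dist x y / ((1 - ‖x‖) * (1 - ‖y‖)) := by
    have : 0 < 1 - ‖x‖ := by linarith
    have : 0 < 1 - ‖y‖ := by linarith
    positivity
  rw [cassinian, frontier_ball (0 : E n) one_ne_zero]
  exact Real.iSup_le (fun p => Real.iSup_le
    (fun hp => div_dist_mul_dist_le_of_mem_sphere hx hy hp) hbound) hbound

theorem div_dist_mul_dist_le_cassinian_ball (hx : ‖x‖ < 1) (hy : ‖y‖ < 1) {p : E n}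
    (hp : p ∈ sphere (0 : E n) 1) :
    dist x y / (dist x p * dist p y) ≤ cassinian (ball (0 : E n) 1) x y := by
  rw [cassinian, frontier_ball (0 : E n) one_ne_zero]
  refine le_ciSup₂ (f := fun p (_ : p ∈ sphere (0 : E n) 1) => dist x y / (dist x p * dist p y))
    ⟨dist x y / ((1 - ‖x‖) * (1 - ‖y‖)), ?_⟩ p hp
  simp only [mem_upperBounds, mem_iUnion, mem_range]
  rintro _ ⟨q, hq, rfl⟩
  exact div_dist_mul_dist_le_of_mem_sphere hx hy hq

theorem cassinian_comm (D : Set (E n)) (x y : E n) : cassinian D x y = cassinian D y x := by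
  simp only [cassinian, dist_comm, mul_comm]

theorem dist_div_le_cassinian_ball [Nontrivial (E n)] (hx : ‖x‖ < 1) (hy : ‖y‖ < 1) :
    dist x y / ((1 - ‖x‖) * (1 - ‖x‖ + dist x y)) ≤ cassinian (ball (0 : E n) 1) x y := by
  obtain ⟨p, hp, hxp⟩ := exists_mem_sphere_dist_eq_one_sub_norm hx.le
  have hpy : dist p y ≤ 1 - ‖x‖ + dist x y :=
    (dist_triangle p x y).trans_eq (by rw [dist_comm, hxp])
  have hpy' : 1 - ‖y‖ ≤ dist p y := dist_comm y p ▸ one_sub_norm_le_dist_of_mem_sphere hp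
  have ha : 0 < 1 - ‖x‖ := by linarith
  have hpy₀ : 0 < dist p y := by linarith
  refine le_trans ?_ (div_dist_mul_dist_le_cassinian_ball hx hy hp)
  rw [hxp]
  exact div_le_div_of_nonneg_left dist_nonneg (mul_pos ha hpy₀) (by gcongr)

theorem hyperDist_nonneg : 0 ≤ hyperDist x y :=
  mul_nonneg zero_le_two (arsinh_nonneg_iff.2 (by positivity))

theorem sinh_half_hyperDist_sq (hx : ‖x‖ < 1) (hy : ‖y‖ < 1) :
    sinh (hyperDist x y / 2) ^ 2 = dist x y ^ 2 / ((1 - ‖x‖ ^ 2) * (1 - ‖y‖ ^ 2)) := by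
  have hx2 : 0 ≤ 1 - ‖x‖ ^ 2 := by nlinarith [norm_nonneg x]
  have hy2 : 0 ≤ 1 - ‖y‖ ^ 2 := by nlinarith [norm_nonneg y]
  rw [hyperDist, mul_div_cancel_left₀ _ two_ne_zero, sinh_arsinh, div_pow,
    sq_sqrt (mul_nonneg hx2 hy2)]

theorem log_one_add_dist_div_le_hyperDist (hx : ‖x‖ < 1) (hy : ‖y‖ < 1) :
    log (1 + dist x y / (1 - ‖y‖)) ≤ hyperDist x y := by
  set m := dist x y
  set b := 1 - ‖y‖
  have hb : 0 < b := by linarith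
  have hq : 1 ≤ 1 + m / b := le_add_of_nonneg_right (by positivity)
  rw [← strictMonoOn_sinh_half_sq.le_iff_le (log_nonneg hq) hyperDist_nonneg,
    sinh_half_log_sq (by linarith), sinh_half_hyperDist_sq hx hy,
    show (1 + m / b - 1) ^ 2 / (4 * (1 + m / b)) = m ^ 2 / ((2 * (b + m)) * (2 * b)) by
      field_simp; ring]
  have hxm : 1 - ‖x‖ ≤ b + m := by
    have := norm_sub_norm_le y x
    rw [← dist_eq_norm, dist_comm] at this
    linarith
  have hx2 : 0 < 1 - ‖x‖ ^ 2 := by nlinarith [norm_nonneg x]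
  have hy2 : 0 < 1 - ‖y‖ ^ 2 := by nlinarith [norm_nonneg y]
  apply div_le_div_of_nonneg_left (sq_nonneg m) (mul_pos hx2 hy2)
  gcongr
  · nlinarith [norm_nonneg x]
  · nlinarith [norm_nonneg y]

theorem cassinian_ball_lt_of_hyperDist_lt (hx : ‖x‖ < 1) (hy : ‖y‖ < 1) {t : ℝ} (ht : 0 < t)
    (h : hyperDist x y < log (1 + t * (1 - ‖x‖) / (1 + t * (1 - ‖x‖)))) :
    cassinian (ball (0 : E n) 1) x y < t := by
  have ha : 0 < 1 - ‖x‖ := by linarith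
  have hb : 0 < 1 - ‖y‖ := by linarith
  have hu : 0 < t * (1 - ‖x‖) := by positivity
  have hm : dist x y / (1 - ‖y‖) < t * (1 - ‖x‖) := by
    have hlog := (log_one_add_dist_div_le_hyperDist hx hy).trans_lt h
    rw [log_lt_log_iff (by positivity) (by positivity), add_lt_add_iff_left] at hlog
    exact hlog.trans (div_lt_self hu (by linarith))
  calc cassinian (ball (0 : E n) 1) x y ≤ dist x y / ((1 - ‖x‖) * (1 - ‖y‖)) :=
        cassinian_ball_le hx hy
    _ < t := by
      rw [div_lt_iff₀ (by positivity), ← mul_assoc]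
      exact (div_lt_iff₀ hb).1 hm

theorem hyperDist_lt_of_cassinian_ball_lt (hx : ‖x‖ < 1) (hy : ‖y‖ < 1) {t : ℝ} (ht : 0 < t)
    (ht1 : t * (1 - ‖x‖) < 1) (h : cassinian (ball (0 : E n) 1) x y < t) :
    hyperDist x y < 2 * t * (1 - ‖x‖) / (1 - t * (1 - ‖x‖)) := by
  have ha : 0 < 1 - ‖x‖ := by linarith
  have hb : 0 < 1 - ‖y‖ := by linarith
  have hR : 0 < 2 * t * (1 - ‖x‖) / (1 - t * (1 - ‖x‖)) := div_pos (by positivity) (by linarith)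
  rcases eq_or_ne x y with rfl | hxy
  · simpa [hyperDist] using hR
  have : Nontrivial (E n) := ⟨⟨x, y, hxy⟩⟩
  have h₁ := (dist_div_le_cassinian_ball hx hy).trans_lt h
  have h₂ := (dist_div_le_cassinian_ball hy hx).trans_lt (cassinian_comm _ x y ▸ h)
  rw [div_lt_iff₀ (by positivity)] at h₁ h₂
  rw [dist_comm] at h₂
  have hx2 : 1 - ‖x‖ ≤ 1 - ‖x‖ ^ 2 := by nlinarith [mul_nonneg (norm_nonneg x) ha.le]
  have hy2 : 1 - ‖y‖ ≤ 1 - ‖y‖ ^ 2 := by nlinarith [mul_nonneg (norm_nonneg y) hb.le]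
  have hv : 0 ≤ t * (1 - ‖x‖) / (1 - t * (1 - ‖x‖)) := div_nonneg (by positivity) (by linarith)
  rw [← strictMonoOn_sinh_half_sq.lt_iff_lt hyperDist_nonneg hR.le, sinh_half_hyperDist_sq hx hy,
    show 2 * t * (1 - ‖x‖) / (1 - t * (1 - ‖x‖)) / 2 = t * (1 - ‖x‖) / (1 - t * (1 - ‖x‖)) by ring]
  calc dist x y ^ 2 / ((1 - ‖x‖ ^ 2) * (1 - ‖y‖ ^ 2))
      ≤ dist x y ^ 2 / ((1 - ‖x‖) * (1 - ‖y‖)) :=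
        div_le_div_of_nonneg_left (sq_nonneg _) (by positivity) (by gcongr; linarith)
    _ < (t * (1 - ‖x‖) / (1 - t * (1 - ‖x‖))) ^ 2 :=
      sq_div_mul_lt_sq_of_lt_mul_mul_add ha hb dist_nonneg ht.le ht1 h₁ h₂
    _ ≤ sinh (t * (1 - ‖x‖) / (1 - t * (1 - ‖x‖))) ^ 2 := by
      gcongr
      exact self_le_sinh_iff.2 hv

end UnitBall

theorem hyperbolicBall_subset_cassinianBall_subset_general (n : ℕ)
    (x : E n) (hx : x ∈ ball (0 : E n) 1) (t : ℝ) (ht : 0 < t)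
    (ht1 : t * (1 - ‖x‖) < 1) :
    {y ∈ ball (0 : E n) 1 |
          hyperDist x y < Real.log (1 + t * (1 - ‖x‖) / (1 + t * (1 - ‖x‖)))}
        ⊆ {y ∈ ball (0 : E n) 1 | cassinian (ball (0 : E n) 1) x y < t} ∧
      {y ∈ ball (0 : E n) 1 | cassinian (ball (0 : E n) 1) x y < t}
        ⊆ {y ∈ ball (0 : E n) 1 |
          hyperDist x y < 2 * t * (1 - ‖x‖) / (1 - t * (1 - ‖x‖))} := by
  rw [mem_ball_zero_iff] at hx
  refine ⟨fun y ⟨hy, hρ⟩ => ⟨hy, ?_⟩, fun y ⟨hy, hc⟩ => ⟨hy, ?_⟩⟩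
  · exact cassinian_ball_lt_of_hyperDist_lt hx (mem_ball_zero_iff.1 hy) ht hρ
  · exact hyperDist_lt_of_cassinian_ball_lt hx (mem_ball_zero_iff.1 hy) ht ht1 hc

/-- **Inclusion of Cassinian balls of the unit ball between hyperbolic balls.**
Let `x ∈ 𝔹ⁿ`, `t > 0` with `t(1-|x|) < 1`.  Then `B_ρ(x,r) ⊆ B_c(x,t) ⊆ B_ρ(x,R)` with
`r = log(1 + t(1-|x|)/(1+t(1-|x|)))` and `R = 2t(1-|x|)/(1-t(1-|x|))`. -/
theorem hyperbolicBall_subset_cassinianBall_subset (n : ℕ) (hn : 2 ≤ n)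
    (x : E n) (hx : x ∈ ball (0 : E n) 1) (t : ℝ) (ht : 0 < t)
    (ht1 : t * (1 - ‖x‖) < 1) :
    {y ∈ ball (0 : E n) 1 |
          hyperDist x y < Real.log (1 + t * (1 - ‖x‖) / (1 + t * (1 - ‖x‖)))}
        ⊆ {y ∈ ball (0 : E n) 1 | cassinian (ball (0 : E n) 1) x y < t} ∧
      {y ∈ ball (0 : E n) 1 | cassinian (ball (0 : E n) 1) x y < t}
        ⊆ {y ∈ ball (0 : E n) 1 |
          hyperDist x y < 2 * t * (1 - ‖x‖) / (1 - t * (1 - ‖x‖))} :=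
  hyperbolicBall_subset_cassinianBall_subset_general n x hx t ht ht1
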